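/- Extremal PBW degrees of fundamental 𝔰𝔭_{2n}-modules: let n ≥ 1, 1 ≤ k ≤ n, and let 𝔤 = 𝔰𝔭_{2n}(ℂ) (with respect to the skew form Ω below) act on ⋀^k ℂ^{2n}; let 𝔫⁻ ⊂ 𝔤 be the strictly lower triangular matrices in 𝔤 and v = e₁∧⋯∧e_k. For a signed permutation w of {1,…,n}, define v_w = e_{c₁}∧⋯∧e_{c_k} where c_i = w(i) if w(i) > 0 and c_i = 2n+1−|w(i)| if w(i) < 0. Then v_w lies in the PBW filtration of ⋀^k ℂ^{2n} generated by v, and its PBW degree equals #{i ≤ k : w(i) > k} + #{i ≤ k : w(i) < 0}. -/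
import Mathlib


/-- The PBW filtration on a module `M` generated by a vector `v`, with respect to
a set `S` of linear operators (the action of a Lie subalgebra `𝔫⁻`):
`F 0 = span {v}`, `F (s+1) = F s + span {T u : T ∈ S, u ∈ F s}`. -/
def pbwFiltration {R M : Type*} [CommRing R] [AddCommGroup M] [Module R M]
    (S : Set (Module.End R M)) (v : M) : ℕ → Submodule R M
  | 0 => Submodule.span R {v}
  | s + 1 => pbwFiltration S v s ⊔
      Submodule.span R {u | ∃ T ∈ S, ∃ m ∈ pbwFiltration S v s, u = T m}

/-- `v₁ ∧ ⋯ ∧ v_k` as an element of the exterior power `⋀^k ℂ^d`. -/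
noncomputable def wedge (d k : ℕ) (v : Fin k → (Fin d → ℂ)) :
    ⋀[ℂ]^k (Fin d → ℂ) :=
  ⟨ExteriorAlgebra.ιMulti ℂ k v,
    ExteriorAlgebra.ιMulti_range ℂ k (Set.mem_range_self v)⟩

/-- The skew-symmetric bilinear form `Ω` on `ℂ^{2n}`: in 1-based terms,
`Ω(e_i, e_{2n+1-i}) = 1` for `i ≤ n`, `Ω(e_i, e_{2n+1-i}) = -1` for `i ≥ n+1`,
and `Ω(e_i, e_j) = 0` when `i + j ≠ 2n+1`. -/
noncomputable def sympForm (n : ℕ) (u u' : Fin (2 * n) → ℂ) : ℂ :=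
  ∑ a : Fin (2 * n), ∑ b : Fin (2 * n),
    (if (a : ℕ) + (b : ℕ) = 2 * n - 1 then
      (if (a : ℕ) < n then (1 : ℂ) else -1) else 0) * u a * u' b

/-- The operators on `⋀^k ℂ^{2n}` given by the derivation action
`X·(v₁∧⋯∧v_k) = Σ_i v₁∧⋯∧Xv_i∧⋯∧v_k` of a strictly lower triangular matrix
`X ∈ 𝔰𝔭_{2n}(ℂ)` (i.e. `X ∈ 𝔫⁻`). -/
def spLowerDerivations (n k : ℕ) :
    Set (Module.End ℂ (⋀[ℂ]^k (Fin (2 * n) → ℂ))) :=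
  {T | ∃ X : Matrix (Fin (2 * n)) (Fin (2 * n)) ℂ,
    (∀ u u' : Fin (2 * n) → ℂ,
      sympForm n (X.mulVec u) u' + sympForm n u (X.mulVec u') = 0) ∧
    (∀ i j : Fin (2 * n), i ≤ j → X i j = 0) ∧
    ∀ v : Fin k → (Fin (2 * n) → ℂ),
      T (wedge (2 * n) k v) =
        ∑ i : Fin k, wedge (2 * n) k (Function.update v i (X.mulVec (v i)))}


namespace PBWaux

open ExteriorAlgebra


variable {d : ℕ}

lemma comp_update_eq (X : (Fin d → ℂ) →ₗ[ℂ] (Fin d → ℂ)) {m : ℕ} (v : Fin m → (Fin d → ℂ))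
    (i : Fin m) :
    (fun j => (if j = i then X else LinearMap.id) (v j)) = Function.update v i (X (v i)) := by
  funext j
  rcases eq_or_ne j i with rfl | h
  · simp
  · simp [h, Function.update_of_ne h]

noncomputable def altDer (X : (Fin d → ℂ) →ₗ[ℂ] (Fin d → ℂ)) (m : ℕ) :
    (Fin d → ℂ) [⋀^Fin m]→ₗ[ℂ] ExteriorAlgebra ℂ (Fin d → ℂ) where
  toMultilinearMap := ∑ i : Fin m, (ιMulti ℂ m).toMultilinearMap.compLinearMap
      (fun j => if j = i then X else LinearMap.id)
  map_eq_zero_of_eq' := by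
    intro v p q hv hne
    simp only [MultilinearMap.toFun_eq_coe]
    rw [MultilinearMap.sum_apply]
    have hterm : ∀ i : Fin m,
        ((ιMulti ℂ m).toMultilinearMap.compLinearMap
          (fun j => if j = i then X else LinearMap.id)) v
        = ιMulti ℂ m (Function.update v i (X (v i))) := by
      intro i
      rw [MultilinearMap.compLinearMap_apply, comp_update_eq]
      rfl
    calc (∑ i : Fin m, ((ιMulti ℂ m).toMultilinearMap.compLinearMap
          (fun j => if j = i then X else LinearMap.id)) v)
        = ∑ i : Fin m, ιMulti ℂ m (Function.update v i (X (v i))) := by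
          exact Finset.sum_congr rfl (fun i _ => hterm i)
      _ = ∑ i ∈ ({p, q} : Finset (Fin m)), ιMulti ℂ m (Function.update v i (X (v i))) := by
          refine (Finset.sum_subset (Finset.subset_univ _) ?_).symm
          intro i _ hi
          simp only [Finset.mem_insert, Finset.mem_singleton] at hi
          push_neg at hi
          exact (ιMulti ℂ m).map_eq_zero_of_eq _
            (by rw [Function.update_of_ne (Ne.symm hi.1), Function.update_of_ne (Ne.symm hi.2)]
                exact hv) hne
      _ = 0 := by
          rw [Finset.sum_pair hne]
          have hfun : Function.update v p (X (v p))
              = (Function.update v q (X (v q))) ∘ Equiv.swap p q := by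
            funext j
            simp only [Function.comp_apply]
            rcases eq_or_ne j p with rfl | hjp
            · rw [Function.update_self, Equiv.swap_apply_left, Function.update_self, hv]
            · rcases eq_or_ne j q with rfl | hjq
              · rw [Function.update_of_ne (Ne.symm hne), Equiv.swap_apply_right,
                  Function.update_of_ne (Ne.symm hne).symm, hv]
              · rw [Function.update_of_ne hjp, Equiv.swap_apply_of_ne_of_ne hjp hjq,
                  Function.update_of_ne hjq]
          rw [hfun, AlternatingMap.map_swap _ _ hne, neg_add_cancel]

lemma altDer_apply (X : (Fin d → ℂ) →ₗ[ℂ] (Fin d → ℂ)) {m : ℕ} (v : Fin m → (Fin d → ℂ)) :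
    altDer X m v = ∑ i : Fin m, ιMulti ℂ m (Function.update v i (X (v i))) := by
  show (∑ i : Fin m, (ιMulti ℂ m).toMultilinearMap.compLinearMap
      (fun j => if j = i then X else LinearMap.id)) v = _
  rw [MultilinearMap.sum_apply]
  refine Finset.sum_congr rfl (fun i _ => ?_)
  rw [MultilinearMap.compLinearMap_apply, comp_update_eq]
  rfl

noncomputable def Dmap (X : (Fin d → ℂ) →ₗ[ℂ] (Fin d → ℂ)) :
    ExteriorAlgebra ℂ (Fin d → ℂ) →ₗ[ℂ] ExteriorAlgebra ℂ (Fin d → ℂ) :=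
  liftAlternating (fun m => altDer X m)

lemma Dmap_ιMulti (X : (Fin d → ℂ) →ₗ[ℂ] (Fin d → ℂ)) {m : ℕ} (v : Fin m → (Fin d → ℂ)) :
    Dmap X (ιMulti ℂ m v) = ∑ i : Fin m, ιMulti ℂ m (Function.update v i (X (v i))) := by
  rw [Dmap, liftAlternating_apply_ιMulti, altDer_apply]

lemma Dmap_maps (X : (Fin d → ℂ) →ₗ[ℂ] (Fin d → ℂ)) (k : ℕ) :
    ∀ x ∈ ⋀[ℂ]^k (Fin d → ℂ), Dmap X x ∈ ⋀[ℂ]^k (Fin d → ℂ) := by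
  intro x hx
  rw [← ιMulti_span_fixedDegree ℂ k (M := Fin d → ℂ)] at hx ⊢
  induction hx using Submodule.span_induction with
  | mem x h =>
    obtain ⟨v, rfl⟩ := h
    rw [Dmap_ιMulti]
    exact Submodule.sum_mem _ (fun i _ => Submodule.subset_span (Set.mem_range_self _))
  | zero => simp
  | add x y _ _ hx hy => rw [map_add]; exact add_mem hx hy
  | smul c x _ hx => rw [map_smul]; exact Submodule.smul_mem _ c hx

noncomputable def opT (X : (Fin d → ℂ) →ₗ[ℂ] (Fin d → ℂ)) (k : ℕ) :
    Module.End ℂ (⋀[ℂ]^k (Fin d → ℂ)) :=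
  (Dmap X).restrict (Dmap_maps X k)

lemma opT_wedge (X : (Fin d → ℂ) →ₗ[ℂ] (Fin d → ℂ)) (k : ℕ) (v : Fin k → (Fin d → ℂ)) :
    opT X k (wedge d k v) = ∑ i : Fin k, wedge d k (Function.update v i (X (v i))) := by
  apply Subtype.ext
  rw [opT, LinearMap.restrict_apply]
  push_cast
  show Dmap X (ιMulti ℂ k v) = _
  rw [Dmap_ιMulti]
  rfl


noncomputable def eps (n : ℕ) (a : Fin (2 * n)) : ℂ := if (a : ℕ) < n then 1 else -1

lemma eps_rev (a : Fin (2 * n)) : eps n a.rev = -eps n a := by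
  have ha := a.isLt
  have hrev : (a.rev : ℕ) = 2 * n - (a + 1) := Fin.val_rev a
  simp only [eps, Fin.val_rev]
  split_ifs with h1 h2 h2
  · exfalso; omega
  · ring
  · ring
  · exfalso; omega

lemma eps_cases (a : Fin (2 * n)) : eps n a = 1 ∨ eps n a = -1 := by
  unfold eps; split <;> simp

lemma sympForm_apply (u u' : Fin (2 * n) → ℂ) :
    sympForm n u u' = ∑ a : Fin (2 * n), eps n a * u a * u' a.rev := by
  unfold sympForm
  refine Finset.sum_congr rfl fun a _ => ?_
  rw [Finset.sum_eq_single a.rev]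
  · rw [if_pos (by have := a.isLt; have := Fin.val_rev a; omega)]
    rfl
  · intro b _ hb
    rw [if_neg, zero_mul, zero_mul]
    intro hab
    exact hb (Fin.ext (by have := a.isLt; have := Fin.val_rev a; omega))
  · intro h; exact absurd (Finset.mem_univ _) h

/-- The element `f_{a→b}` of `𝔫⁻ ∩ 𝔰𝔭`, sending `e_a ↦ e_b` (up to the
symplectic correction term). -/
noncomputable def XM (n : ℕ) (a b : Fin (2 * n)) : Matrix (Fin (2 * n)) (Fin (2 * n)) ℂ :=
  Matrix.of fun p q => (if p = b ∧ q = a then (1 : ℂ) else 0) +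
    (if p = a.rev ∧ q = b.rev then -(eps n a * eps n b) else 0)

lemma XM_mulVec (a b : Fin (2 * n)) (u : Fin (2 * n) → ℂ) (c : Fin (2 * n)) :
    (XM n a b).mulVec u c =
      (if c = b then u a else 0) + (if c = a.rev then -(eps n a * eps n b) * u b.rev else 0) := by
  unfold XM Matrix.mulVec dotProduct
  simp only [Matrix.of_apply, add_mul, ite_mul, one_mul, zero_mul, Finset.sum_add_distrib]
  congr 1
  · rcases eq_or_ne c b with rfl | h
    · simp
    · simp [h]
  · rcases eq_or_ne c a.rev with rfl | h
    · simp
    · simp [h]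

lemma XM_symp (a b : Fin (2 * n)) (u u' : Fin (2 * n) → ℂ) :
    sympForm n ((XM n a b).mulVec u) u' + sympForm n u ((XM n a b).mulVec u') = 0 := by
  rw [sympForm_apply, sympForm_apply]
  have h1 : ∀ c : Fin (2 * n), eps n c * (XM n a b).mulVec u c * u' c.rev =
      (if c = b then eps n b * u a * u' b.rev else 0) +
      (if c = a.rev then eps n a.rev * (-(eps n a * eps n b) * u b.rev) * u' a.rev.rev else 0) := by
    intro c
    rw [XM_mulVec, mul_add, add_mul]
    congr 1
    · split
      · subst_eqs; ring
      · ring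
    · split
      · subst_eqs; ring
      · ring
  have h2 : ∀ c : Fin (2 * n), eps n c * u c * (XM n a b).mulVec u' c.rev =
      (if c = b.rev then eps n b.rev * u b.rev * u' a else 0) +
      (if c = a then eps n a * u a * (-(eps n a * eps n b) * u' b.rev) else 0) := by
    intro c
    rw [XM_mulVec, mul_add]
    congr 1
    · have hiff : (c.rev = b) = (c = b.rev) := by
        apply propext
        constructor
        · intro h; rw [← h, Fin.rev_rev]
        · intro h; rw [h, Fin.rev_rev]
      simp only [hiff]
      split_ifs with hc
      · subst hc; ring
      · ring
    · have hiff : (c.rev = a.rev) = (c = a) := by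
        apply propext
        constructor
        · intro h; exact Fin.rev_injective h
        · intro h; rw [h]
      simp only [hiff]
      split_ifs with hc
      · subst hc; ring
      · ring
  rw [Finset.sum_congr rfl (fun c _ => h1 c), Finset.sum_congr rfl (fun c _ => h2 c),
    Finset.sum_add_distrib, Finset.sum_add_distrib, Finset.sum_ite_eq' Finset.univ,
    Finset.sum_ite_eq' Finset.univ, Finset.sum_ite_eq' Finset.univ,
    Finset.sum_ite_eq' Finset.univ]
  simp only [Finset.mem_univ, if_true, Fin.rev_rev, eps_rev]
  rcases eps_cases (n := n) a with ha | ha <;> rcases eps_cases (n := n) b with hb | hb <;>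
    rw [ha, hb] <;> ring

lemma XM_lower {a b : Fin (2 * n)} (hab : a < b) :
    ∀ i j : Fin (2 * n), i ≤ j → XM n a b i j = 0 := by
  intro i j hij
  have hab' : (a : ℕ) < (b : ℕ) := hab
  have h1 : (a.rev : ℕ) = 2 * n - (a + 1) := Fin.val_rev a
  have h2 : (b.rev : ℕ) = 2 * n - (b + 1) := Fin.val_rev b
  have hb := b.isLt
  unfold XM
  rw [Matrix.of_apply, if_neg, if_neg, add_zero]
  · rintro ⟨rfl, rfl⟩
    have := Fin.le_def.mp hij
    omega
  · rintro ⟨rfl, rfl⟩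
    have := Fin.le_def.mp hij
    omega



variable {n k : ℕ}

noncomputable def wedgeAlt (d k : ℕ) :
    (Fin d → ℂ) [⋀^Fin k]→ₗ[ℂ] (⋀[ℂ]^k (Fin d → ℂ)) :=
  (ιMulti ℂ k).codRestrict (⋀[ℂ]^k (Fin d → ℂ))
    (fun v => ιMulti_range ℂ k (Set.mem_range_self v))

lemma wedge_eq (d k : ℕ) (v : Fin k → (Fin d → ℂ)) : wedge d k v = wedgeAlt d k v := rfl

/-- Wedge of standard basis vectors indexed by `c`. -/
noncomputable def Ws (n k : ℕ) (c : Fin k → Fin (2 * n)) : ⋀[ℂ]^k (Fin (2 * n) → ℂ) :=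
  wedge (2 * n) k (fun i => Pi.single (c i) 1)

lemma opT_mem (a b : Fin (2 * n)) (hab : a < b) :
    opT (XM n a b).mulVecLin k ∈ spLowerDerivations n k := by
  refine ⟨XM n a b, XM_symp a b, XM_lower hab, fun v => ?_⟩
  rw [opT_wedge]
  refine Finset.sum_congr rfl (fun i _ => ?_)
  rw [Matrix.mulVecLin_apply]

lemma XM_col_zero (a b c : Fin (2 * n)) (hca : c ≠ a) (hcb : c ≠ b.rev) :
    (XM n a b).mulVec (Pi.single c 1) = 0 := by
  funext p
  rw [XM_mulVec]
  rw [Pi.single_eq_of_ne (Ne.symm hca), Pi.single_eq_of_ne (fun h => hcb h.symm)]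
  simp

lemma XM_col_a (a b : Fin (2 * n)) :
    (XM n a b).mulVec (Pi.single a 1) =
      (if b = a.rev then (2 : ℂ) else 1) • (Pi.single b 1 : Fin (2 * n) → ℂ) := by
  funext p
  rw [XM_mulVec, Pi.single_eq_same]
  by_cases hba : b = a.rev
  · subst hba
    rw [if_pos rfl, Fin.rev_rev, Pi.single_eq_same, eps_rev, mul_one]
    by_cases hp : p = a.rev
    · rw [if_pos hp, if_pos hp, Pi.smul_apply, hp, Pi.single_eq_same]
      rcases eps_cases (n := n) a with h | h <;> rw [h] <;> norm_num
    · rw [if_neg hp, if_neg hp, Pi.smul_apply, Pi.single_eq_of_ne hp]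
      norm_num
  · have h2 : b.rev ≠ a := fun h => hba (by rw [← h, Fin.rev_rev])
    rw [if_neg hba, Pi.single_eq_of_ne h2, one_smul, mul_zero]
    by_cases hp : p = b
    · rw [if_pos hp, if_neg (fun hh => hba (hp.symm.trans hh)), hp, Pi.single_eq_same]
      ring
    · rw [if_neg hp, Pi.single_eq_of_ne hp]
      simp

lemma update_single_comp (c : Fin k → Fin (2 * n)) (i₀ : Fin k) (b : Fin (2 * n)) :
    Function.update (fun j => (Pi.single (c j) 1 : Fin (2 * n) → ℂ)) i₀
        (Pi.single b 1 : Fin (2 * n) → ℂ) =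
      fun j => (Pi.single (Function.update c i₀ b j) 1 : Fin (2 * n) → ℂ) := by
  funext j
  rcases eq_or_ne j i₀ with rfl | h
  · rw [Function.update_self, Function.update_self]
  · rw [Function.update_of_ne h, Function.update_of_ne h]

lemma step (v₀ : ⋀[ℂ]^k (Fin (2 * n) → ℂ)) (a b : Fin (2 * n)) (hab : a < b)
    (c : Fin k → Fin (2 * n)) (i₀ : Fin k) (hci : c i₀ = a)
    (hother : ∀ j, j ≠ i₀ → c j ≠ b.rev ∧ c j ≠ a)
    (s : ℕ) (hc : Ws n k c ∈ pbwFiltration (spLowerDerivations n k) v₀ s) :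
    Ws n k (Function.update c i₀ b) ∈ pbwFiltration (spLowerDerivations n k) v₀ (s + 1) := by
  classical
  set κ : ℂ := if b = a.rev then (2 : ℂ) else 1 with hκdef
  have hκ : κ ≠ 0 := by rw [hκdef]; split_ifs <;> norm_num
  set T := opT (XM n a b).mulVecLin k with hT
  have key : T (Ws n k c) = κ • Ws n k (Function.update c i₀ b) := by
    rw [hT, Ws, opT_wedge]
    rw [Finset.sum_eq_single i₀]
    · rw [Matrix.mulVecLin_apply, hci, XM_col_a, wedge_eq,
        (wedgeAlt (2 * n) k).map_update_smul, ← hκdef, update_single_comp, ← wedge_eq, Ws]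
    · intro i _ hi
      rw [Matrix.mulVecLin_apply,
        XM_col_zero a b (c i) (hother i hi).2 (hother i hi).1, wedge_eq,
        (wedgeAlt (2 * n) k).map_update_zero]
    · intro h; exact absurd (Finset.mem_univ _) h
  have hmem : T (Ws n k c) ∈ pbwFiltration (spLowerDerivations n k) v₀ (s + 1) := by
    have hdef : pbwFiltration (spLowerDerivations n k) v₀ (s + 1) =
        pbwFiltration (spLowerDerivations n k) v₀ s ⊔
          Submodule.span ℂ {u | ∃ T ∈ spLowerDerivations n k,
            ∃ m ∈ pbwFiltration (spLowerDerivations n k) v₀ s, u = T m} := rfl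
    rw [hdef]
    exact Submodule.mem_sup_right (Submodule.subset_span
      ⟨T, opT_mem a b hab, Ws n k c, hc, rfl⟩)
  have : Ws n k (Function.update c i₀ b) = κ⁻¹ • T (Ws n k c) := by
    rw [key, smul_smul, inv_mul_cancel₀ hκ, one_smul]
  rw [this]
  exact Submodule.smul_mem _ _ hmem

lemma chain (v₀ : ⋀[ℂ]^k (Fin (2 * n) → ℂ)) (tgt : Fin k → Fin (2 * n))
    (Htinj : Function.Injective tgt)
    (Htgt : ∀ i j, tgt i ≠ (tgt j).rev) :
    ∀ m (c : Fin k → Fin (2 * n)), Function.Injective c →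
    (∀ i, c i = tgt i ∨ ((c i : ℕ) < k ∧ k ≤ (tgt i : ℕ) ∧
        (((tgt i).rev : ℕ) < k → c i = (tgt i).rev))) →
    (Finset.univ.filter (fun i => c i ≠ tgt i)).card = m →
    ∀ s, Ws n k c ∈ pbwFiltration (spLowerDerivations n k) v₀ s →
    Ws n k tgt ∈ pbwFiltration (spLowerDerivations n k) v₀ (s + m) := by
  intro m
  induction m with
  | zero =>
    intro c _ _ hcard s hc
    have : ∀ i, c i = tgt i := by
      intro i
      by_contra hne
      have : i ∈ Finset.univ.filter (fun i => c i ≠ tgt i) := by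
        simp [hne]
      rw [Finset.card_eq_zero] at hcard
      rw [hcard] at this
      exact absurd this (Finset.notMem_empty _)
    have : c = tgt := funext this
    subst this
    exact hc
  | succ m ih =>
    intro c hcinj hH hcard s hc
    have hne : (Finset.univ.filter (fun i => c i ≠ tgt i)).Nonempty := by
      rw [← Finset.card_pos, hcard]; omega
    obtain ⟨i₀, hi₀⟩ := hne
    rw [Finset.mem_filter] at hi₀
    have hi₀ne : c i₀ ≠ tgt i₀ := hi₀.2
    obtain ⟨hlt, hge, hpair⟩ := (hH i₀).resolve_left hi₀ne
    set a := c i₀ with ha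
    set b := tgt i₀ with hb
    have hab : a < b := by rw [Fin.lt_def]; omega
    have hother : ∀ j, j ≠ i₀ → c j ≠ b.rev ∧ c j ≠ a := by
      intro j hj
      constructor
      · rcases hH j with h | ⟨h1, _, _⟩
        · rw [h]; exact Htgt j i₀
        · by_cases hbr : ((b.rev : Fin (2 * n)) : ℕ) < k
          · have hc0 : c i₀ = b.rev := hpair hbr
            exact fun h => hj (hcinj (h.trans hc0.symm))
          · intro h; rw [h] at h1; exact hbr h1
      · exact fun h => hj (hcinj h)
    have hstep := step v₀ a b hab c i₀ ha.symm hother s hc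
    set c' := Function.update c i₀ b with hc'
    have hbnotc : ∀ y, y ≠ i₀ → c y ≠ b := by
      intro y hy hcy
      rcases hH y with h | ⟨h1, _, _⟩
      · exact hy (Htinj (h.symm.trans hcy))
      · rw [hcy] at h1; omega
    have hc'inj : Function.Injective c' := by
      intro x y hxy
      rcases eq_or_ne x i₀ with hx | hx
      · rcases eq_or_ne y i₀ with hy | hy
        · rw [hx, hy]
        · exfalso
          rw [hc', hx, Function.update_self, Function.update_of_ne hy] at hxy
          exact hbnotc y hy hxy.symm
      · rcases eq_or_ne y i₀ with hy | hy
        · exfalso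
          rw [hc', hy, Function.update_of_ne hx, Function.update_self] at hxy
          exact hbnotc x hx hxy
        · rw [hc', Function.update_of_ne hx, Function.update_of_ne hy] at hxy
          exact hcinj hxy
    have hH' : ∀ i, c' i = tgt i ∨ ((c' i : ℕ) < k ∧ k ≤ (tgt i : ℕ) ∧
        (((tgt i).rev : ℕ) < k → c' i = (tgt i).rev)) := by
      intro i
      rcases eq_or_ne i i₀ with rfl | hi
      · left; rw [hc', Function.update_self]
      · rw [hc', Function.update_of_ne hi]; exact hH i
    have hcard' : (Finset.univ.filter (fun i => c' i ≠ tgt i)).card = m := by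
      have hset : Finset.univ.filter (fun i => c' i ≠ tgt i) =
          (Finset.univ.filter (fun i => c i ≠ tgt i)).erase i₀ := by
        ext j
        rw [Finset.mem_erase, Finset.mem_filter, Finset.mem_filter]
        constructor
        · intro ⟨_, hj⟩
          rcases eq_or_ne j i₀ with rfl | hji
          · rw [hc', Function.update_self] at hj; exact absurd rfl hj
          · rw [hc', Function.update_of_ne hji] at hj
            exact ⟨hji, Finset.mem_univ _, hj⟩
        · intro ⟨hji, _, hj⟩
          rw [hc', Function.update_of_ne hji]
          exact ⟨Finset.mem_univ _, hj⟩
      rw [hset, Finset.card_erase_of_mem (by rw [Finset.mem_filter]; exact ⟨Finset.mem_univ _, hi₀ne⟩), hcard]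
      omega
    have := ih c' hc'inj hH' hcard' (s + 1) hstep
    rw [show s + (m + 1) = s + 1 + m by omega]
    exact this

/-! ### Lower bound: grading by number of indices `≥ k` -/

/-- Span of basis wedges with at most `s` factors of index `≥ k`. -/
noncomputable def Wgrade (n k s : ℕ) : Submodule ℂ (⋀[ℂ]^k (Fin (2 * n) → ℂ)) :=
  Submodule.span ℂ {x | ∃ c : Fin k → Fin (2 * n),
    (Finset.univ.filter (fun i => k ≤ (c i : ℕ))).card ≤ s ∧ x = Ws n k c}

lemma Wgrade_mono {s t : ℕ} (h : s ≤ t) : Wgrade n k s ≤ Wgrade n k t :=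
  Submodule.span_mono (fun x hx => by
    obtain ⟨c, hc, hx⟩ := hx
    exact ⟨c, hc.trans h, hx⟩)

lemma mulVec_single_decomp (X : Matrix (Fin (2 * n)) (Fin (2 * n)) ℂ) (q : Fin (2 * n)) :
    X.mulVec (Pi.single q 1) =
      ∑ p : Fin (2 * n), X p q • (Pi.single p 1 : Fin (2 * n) → ℂ) := by
  rw [Matrix.mulVec_single]
  funext r
  rw [Finset.sum_apply]
  simp [Pi.single_apply]

lemma count_update_le (c : Fin k → Fin (2 * n)) (i : Fin k) (p : Fin (2 * n)) {s : ℕ}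
    (hc : (Finset.univ.filter (fun j => k ≤ (c j : ℕ))).card ≤ s) :
    (Finset.univ.filter (fun j => k ≤ ((Function.update c i p j : Fin (2 * n)) : ℕ))).card
      ≤ s + 1 := by
  have hsub : Finset.univ.filter (fun j => k ≤ ((Function.update c i p j : Fin (2 * n)) : ℕ))
      ⊆ insert i (Finset.univ.filter (fun j => k ≤ (c j : ℕ))) := by
    intro j hj
    rw [Finset.mem_filter] at hj
    rcases eq_or_ne j i with rfl | hji
    · exact Finset.mem_insert_self _ _
    · rw [Function.update_of_ne hji] at hj
      exact Finset.mem_insert_of_mem (Finset.mem_filter.mpr ⟨Finset.mem_univ _, hj.2⟩)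
  calc _ ≤ (insert i (Finset.univ.filter (fun j => k ≤ (c j : ℕ)))).card :=
        Finset.card_le_card hsub
    _ ≤ _ := by
        have := Finset.card_insert_le i (Finset.univ.filter (fun j => k ≤ (c j : ℕ)))
        omega

lemma T_gen_mem {T : Module.End ℂ (⋀[ℂ]^k (Fin (2 * n) → ℂ))}
    (hT : T ∈ spLowerDerivations n k) (c : Fin k → Fin (2 * n)) {s : ℕ}
    (hc : (Finset.univ.filter (fun i => k ≤ (c i : ℕ))).card ≤ s) :
    T (Ws n k c) ∈ Wgrade n k (s + 1) := by
  obtain ⟨X, -, -, hder⟩ := hT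
  rw [Ws, hder]
  refine Submodule.sum_mem _ (fun i _ => ?_)
  have hexp : wedge (2 * n) k (Function.update
        (fun j => (Pi.single (c j) 1 : Fin (2 * n) → ℂ)) i (X.mulVec (Pi.single (c i) 1)))
      = ∑ p : Fin (2 * n), X p (c i) • Ws n k (Function.update c i p) := by
    rw [mulVec_single_decomp, wedge_eq]
    have h1 : (wedgeAlt (2 * n) k) (Function.update
          (fun j => (Pi.single (c j) 1 : Fin (2 * n) → ℂ)) i
          (∑ p : Fin (2 * n), X p (c i) • (Pi.single p 1 : Fin (2 * n) → ℂ)))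
        = ∑ p : Fin (2 * n), (wedgeAlt (2 * n) k) (Function.update
          (fun j => (Pi.single (c j) 1 : Fin (2 * n) → ℂ)) i
          (X p (c i) • (Pi.single p 1 : Fin (2 * n) → ℂ))) :=
      (wedgeAlt (2 * n) k).toMultilinearMap.map_update_sum Finset.univ i _ _
    rw [h1]
    refine Finset.sum_congr rfl (fun p _ => ?_)
    rw [(wedgeAlt (2 * n) k).map_update_smul, update_single_comp, ← wedge_eq, Ws]
  rw [hexp]
  refine Submodule.sum_mem _ (fun p _ => ?_)
  exact Submodule.smul_mem _ _ (Submodule.subset_span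
    ⟨Function.update c i p, count_update_le c i p hc, rfl⟩)

lemma F_le_Wgrade (c₀ : Fin k → Fin (2 * n))
    (hc₀ : (Finset.univ.filter (fun i => k ≤ ((c₀ i : Fin (2 * n)) : ℕ))).card = 0) :
    ∀ s : ℕ, pbwFiltration (spLowerDerivations n k) (Ws n k c₀) s ≤ Wgrade n k s := by
  intro s
  induction s with
  | zero =>
    show Submodule.span ℂ {Ws n k c₀} ≤ Wgrade n k 0
    rw [Submodule.span_le, Set.singleton_subset_iff]
    exact Submodule.subset_span ⟨c₀, le_of_eq hc₀, rfl⟩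
  | succ s ih =>
    show pbwFiltration (spLowerDerivations n k) (Ws n k c₀) s ⊔ _ ≤ Wgrade n k (s + 1)
    refine sup_le (ih.trans (Wgrade_mono (Nat.le_succ s))) ?_
    rw [Submodule.span_le]
    rintro u ⟨T, hT, m, hm, rfl⟩
    have hmW : m ∈ Wgrade n k s := ih hm
    clear hm
    induction hmW using Submodule.span_induction with
    | mem x hx =>
      obtain ⟨c, hcount, rfl⟩ := hx
      exact T_gen_mem hT c hcount
    | zero => rw [map_zero]; exact Submodule.zero_mem _
    | add x y _ _ hx hy => rw [map_add]; exact Submodule.add_mem _ hx hy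
    | smul a x _ hx => rw [map_smul]; exact Submodule.smul_mem _ a hx

/-! ### The separating functional -/

section functional

variable (tgt : Fin k → Fin (2 * n)) (Htinj : Function.Injective tgt)

noncomputable def targetIso (tgt : Fin k → Fin (2 * n)) (Htinj : Function.Injective tgt) :
    Fin k ≃o {x // x ∈ Finset.image tgt Finset.univ} :=
  (Finset.image tgt Finset.univ).orderIsoOfFin
    (by rw [Finset.card_image_of_injective _ Htinj, Finset.card_univ, Fintype.card_fin])

/-- The alternating functional given by the minor on the columns in the image of `tgt`. -/
noncomputable def detFun : ((Fin (2 * n) → ℂ)) [⋀^Fin k]→ₗ[ℂ] ℂ :=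
  (Matrix.detRowAlternating).compLinearMap
    (LinearMap.funLeft ℂ ℂ (fun j => (targetIso tgt Htinj j : Fin (2 * n))))

noncomputable def psi : (⋀[ℂ]^k (Fin (2 * n) → ℂ)) →ₗ[ℂ] ℂ :=
  (ExteriorAlgebra.liftAlternating
    (fun m => if h : k = m then (detFun tgt Htinj).domDomCongr (finCongr h) else 0)).comp
    (Submodule.subtype _)

lemma psi_Ws (c : Fin k → Fin (2 * n)) :
    psi tgt Htinj (Ws n k c) =
      Matrix.det (Matrix.of fun i j =>
        (Pi.single (c i) 1 : Fin (2 * n) → ℂ) ((targetIso tgt Htinj j : Fin (2 * n)))) := by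
  rw [psi, LinearMap.comp_apply]
  show ExteriorAlgebra.liftAlternating _ (ιMulti ℂ k _) = _
  rw [ExteriorAlgebra.liftAlternating_apply_ιMulti, dif_pos rfl]
  simp only [AlternatingMap.domDomCongr_apply, finCongr_refl, Equiv.coe_refl,
    Function.comp_id]
  rfl

lemma psi_vanishes {s : ℕ} (hs : s < (Finset.univ.filter
      (fun i => k ≤ (tgt i : ℕ))).card)
    {x : ⋀[ℂ]^k (Fin (2 * n) → ℂ)} (hx : x ∈ Wgrade n k s) :
    psi tgt Htinj x = 0 := by
  have : Wgrade n k s ≤ LinearMap.ker (psi tgt Htinj) := by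
    rw [Wgrade, Submodule.span_le]
    rintro u ⟨c, hcount, rfl⟩
    rw [SetLike.mem_coe, LinearMap.mem_ker, psi_Ws]
    -- find a column not hit by c
    have hex : ∃ x ∈ Finset.image tgt Finset.univ, k ≤ (x : ℕ) ∧ x ∉ Set.range c := by
      by_contra hno
      push_neg at hno
      have hsub : (Finset.image tgt Finset.univ).filter (fun x : Fin (2 * n) => k ≤ (x : ℕ)) ⊆
          Finset.image c (Finset.univ.filter (fun i => k ≤ (c i : ℕ))) := by
        intro x hx
        rw [Finset.mem_filter] at hx
        obtain ⟨i, rfl⟩ := hno x hx.1 hx.2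
        exact Finset.mem_image.mpr ⟨i, Finset.mem_filter.mpr ⟨Finset.mem_univ _, hx.2⟩, rfl⟩
      have h1 : ((Finset.image tgt Finset.univ).filter
          (fun x : Fin (2 * n) => k ≤ (x : ℕ))).card =
          (Finset.univ.filter (fun i => k ≤ (tgt i : ℕ))).card := by
        rw [Finset.filter_image, Finset.card_image_of_injective _ Htinj]
      have h2 := (Finset.card_le_card hsub).trans (Finset.card_image_le)
      omega
    obtain ⟨x, hxmem, hxk, hxr⟩ := hex
    apply Matrix.det_eq_zero_of_column_eq_zero ((targetIso tgt Htinj).symm ⟨x, hxmem⟩)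
    intro i
    rw [Matrix.of_apply]
    have : ((targetIso tgt Htinj ((targetIso tgt Htinj).symm ⟨x, hxmem⟩) : Fin (2 * n))) = x := by
      rw [OrderIso.apply_symm_apply]
    rw [this]
    exact Pi.single_eq_of_ne (fun h => hxr ⟨i, h.symm⟩) 1
  exact LinearMap.mem_ker.mp (this hx)

lemma psi_Ws_tgt_ne_zero : psi tgt Htinj (Ws n k tgt) ≠ 0 := by
  rw [psi_Ws]
  have hmem : ∀ i, tgt i ∈ Finset.image tgt Finset.univ :=
    fun i => Finset.mem_image.mpr ⟨i, Finset.mem_univ _, rfl⟩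
  have hinj2 : Function.Injective
      (fun i => (targetIso tgt Htinj).symm ⟨tgt i, hmem i⟩) := by
    intro i j hij
    simp only at hij
    have := congrArg (fun z => ((targetIso tgt Htinj z : {x // x ∈ Finset.image tgt Finset.univ}) : Fin (2 * n))) hij
    simp only [OrderIso.apply_symm_apply] at this
    exact Htinj this
  set e : Equiv.Perm (Fin k) :=
    Equiv.ofBijective _ ((Finite.injective_iff_bijective).mp hinj2) with he
  have hM : (Matrix.of fun i j =>
      (Pi.single (tgt i) 1 : Fin (2 * n) → ℂ) ((targetIso tgt Htinj j : Fin (2 * n)))) =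
      (1 : Matrix (Fin k) (Fin k) ℂ).submatrix e id := by
    ext i j
    rw [Matrix.of_apply, Matrix.submatrix_apply, Matrix.one_apply, Pi.single_apply, id]
    congr 1
    apply propext
    constructor
    · intro h
      have : (⟨tgt i, hmem i⟩ : {x // x ∈ Finset.image tgt Finset.univ}) =
          targetIso tgt Htinj j := Subtype.ext h.symm
      show (targetIso tgt Htinj).symm ⟨tgt i, hmem i⟩ = j
      rw [this, OrderIso.symm_apply_apply]
    · intro h
      have : targetIso tgt Htinj (e i) = ⟨tgt i, hmem i⟩ := by
        show targetIso tgt Htinj ((targetIso tgt Htinj).symm ⟨tgt i, hmem i⟩) = _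
        rw [OrderIso.apply_symm_apply]
      rw [← h, this]
  rw [hM, Matrix.det_permute, Matrix.det_one, mul_one]
  rcases Int.units_eq_one_or (Equiv.Perm.sign e) with h | h <;> rw [h] <;> norm_num

end functional

/-! ### The target function of a signed permutation -/

section target

variable {σ : Equiv.Perm (Fin n)} {sg : Fin n → ℤ}

/-- The index function of the extremal vector `v_w`. -/
def tgtF (hkn : k ≤ n) (σ : Equiv.Perm (Fin n)) (sg : Fin n → ℤ) : Fin k → Fin (2 * n) :=
  fun i => if sg (Fin.castLE hkn i) = 1
    then Fin.castLE (by omega) (σ (Fin.castLE hkn i))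
    else (Fin.castLE (by omega : n ≤ 2 * n) (σ (Fin.castLE hkn i))).rev

variable (hkn : k ≤ n) (hs : ∀ i, sg i = 1 ∨ sg i = -1)

lemma tgtF_val_pos (σ : Equiv.Perm (Fin n)) (sg : Fin n → ℤ) {i : Fin k} (h : sg (Fin.castLE hkn i) = 1) :
    (tgtF hkn σ sg i : ℕ) = (σ (Fin.castLE hkn i) : ℕ) := by
  rw [tgtF, if_pos h, Fin.coe_castLE]

lemma tgtF_val_neg (σ : Equiv.Perm (Fin n)) (sg : Fin n → ℤ) {i : Fin k} (h : sg (Fin.castLE hkn i) ≠ 1) :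
    (tgtF hkn σ sg i : ℕ) = 2 * n - ((σ (Fin.castLE hkn i) : ℕ) + 1) := by
  rw [tgtF, if_neg h, Fin.val_rev, Fin.coe_castLE]

lemma castLE_inj_k {i j : Fin k} (h : Fin.castLE hkn i = Fin.castLE hkn j) : i = j := by
  have := congrArg Fin.val h
  rw [Fin.coe_castLE, Fin.coe_castLE] at this
  exact Fin.val_injective this

lemma sigma_inj_k {i j : Fin k}
    (h : (σ (Fin.castLE hkn i) : ℕ) = (σ (Fin.castLE hkn j) : ℕ)) : i = j :=
  castLE_inj_k hkn (σ.injective (Fin.val_injective h))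

lemma tgtF_inj : Function.Injective (tgtF hkn σ sg) := by
  intro i j h
  have hv := congrArg Fin.val h
  have hσi := (σ (Fin.castLE hkn i)).isLt
  have hσj := (σ (Fin.castLE hkn j)).isLt
  by_cases hi : sg (Fin.castLE hkn i) = 1 <;> by_cases hj : sg (Fin.castLE hkn j) = 1
  · rw [tgtF_val_pos hkn σ sg hi, tgtF_val_pos hkn σ sg hj] at hv
    exact sigma_inj_k hkn hv
  · rw [tgtF_val_pos hkn σ sg hi, tgtF_val_neg hkn σ sg hj] at hv
    omega
  · rw [tgtF_val_neg hkn σ sg hi, tgtF_val_pos hkn σ sg hj] at hv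
    omega
  · rw [tgtF_val_neg hkn σ sg hi, tgtF_val_neg hkn σ sg hj] at hv
    exact sigma_inj_k (σ := σ) hkn (by omega)

lemma tgtF_not_rev : ∀ i j, tgtF hkn σ sg i ≠ (tgtF hkn σ sg j).rev := by
  intro i j h
  have hv := congrArg Fin.val h
  rw [Fin.val_rev] at hv
  have hσi := (σ (Fin.castLE hkn i)).isLt
  have hσj := (σ (Fin.castLE hkn j)).isLt
  have h2n : 0 < 2 * n := by omega
  by_cases hi : sg (Fin.castLE hkn i) = 1 <;> by_cases hj : sg (Fin.castLE hkn j) = 1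
  · rw [tgtF_val_pos hkn σ sg hi, tgtF_val_pos hkn σ sg hj] at hv
    omega
  · rw [tgtF_val_pos hkn σ sg hi, tgtF_val_neg hkn σ sg hj] at hv
    have : i = j := sigma_inj_k (σ := σ) hkn (by omega)
    rw [this] at hi
    exact hj hi
  · rw [tgtF_val_neg hkn σ sg hi, tgtF_val_pos hkn σ sg hj] at hv
    have : i = j := sigma_inj_k (σ := σ) hkn (by omega)
    rw [this] at hi
    exact hi hj
  · rw [tgtF_val_neg hkn σ sg hi, tgtF_val_neg hkn σ sg hj] at hv
    omega

end target

/-! ### Extending the prescribed assignment to a permutation -/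

lemma exists_perm (hk2n : k ≤ 2 * n) (tgt : Fin k → Fin (2 * n))
    (Htinj : Function.Injective tgt) (Htgt : ∀ i j, tgt i ≠ (tgt j).rev) :
    ∃ π : Equiv.Perm (Fin k), ∀ i : Fin k,
      ((tgt i : ℕ) < k → Fin.castLE hk2n (π i) = tgt i) ∧
      (¬ ((tgt i : ℕ) < k) → (((tgt i).rev : ℕ) < k) →
        Fin.castLE hk2n (π i) = (tgt i).rev) := by
  classical
  set P : Fin k → Prop := fun i => (tgt i : ℕ) < k ∨ ((tgt i).rev : ℕ) < k with hP
  set g0 : {i // P i} → Fin k := fun i =>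
    if h : (tgt i.1 : ℕ) < k then ⟨(tgt i.1 : ℕ), h⟩
    else ⟨((tgt i.1).rev : ℕ), i.2.resolve_left h⟩ with hg0
  have hg0inj : Function.Injective g0 := by
    rintro ⟨x, hx⟩ ⟨y, hy⟩ hxy
    rw [hg0] at hxy
    simp only at hxy
    apply Subtype.ext
    by_cases h1 : (tgt x : ℕ) < k <;> by_cases h2 : (tgt y : ℕ) < k
    · rw [dif_pos h1, dif_pos h2, Fin.mk.injEq] at hxy
      exact Htinj (Fin.val_injective hxy)
    · rw [dif_pos h1, dif_neg h2, Fin.mk.injEq] at hxy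
      exact absurd (Fin.val_injective hxy) (Htgt x y)
    · rw [dif_neg h1, dif_pos h2, Fin.mk.injEq] at hxy
      exact absurd (Fin.val_injective hxy).symm (Htgt y x)
    · rw [dif_neg h1, dif_neg h2, Fin.mk.injEq] at hxy
      exact Htinj (Fin.rev_injective (Fin.val_injective hxy))
  set Q : Fin k → Prop := fun x => ∃ i : {i // P i}, g0 i = x with hQ
  have hsurj : ∀ x : {x // Q x}, ∃ i : {i // P i}, g0 i = x.1 := fun x => x.2
  let e : {i // P i} ≃ {x // Q x} :=
    Equiv.ofBijective (fun i => ⟨g0 i, ⟨i, rfl⟩⟩)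
      ⟨fun a b hab => hg0inj (congrArg Subtype.val hab),
       fun x => by obtain ⟨i, hi⟩ := x.2; exact ⟨i, Subtype.ext hi⟩⟩
  refine ⟨e.extendSubtype, fun i => ?_⟩
  have hπ : ∀ (h : P i), e.extendSubtype i = g0 ⟨i, h⟩ := by
    intro h
    rw [e.extendSubtype_apply_of_mem i h]
    rfl
  constructor
  · intro h1
    have hp : P i := Or.inl h1
    rw [hπ hp]
    apply Fin.val_injective
    rw [Fin.coe_castLE, hg0]
    simp only [dif_pos h1]
  · intro h1 h2
    have hp : P i := Or.inr h2
    rw [hπ hp]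
    apply Fin.val_injective
    rw [Fin.coe_castLE, hg0]
    simp only [dif_neg h1]

end PBWaux

open PBWaux

/-- Extremal PBW degrees of the fundamental `𝔰𝔭_{2n}`-modules `⋀^k ℂ^{2n}`
(`1 ≤ k ≤ n`).  A signed permutation is encoded by a permutation `σ` of the
0-based index set and signs `s i ∈ {±1}`; the extremal vector is
`v_w = e_{c₁} ∧ ⋯ ∧ e_{c_k}` where (0-based) `c_i = σ(i)` if `s i = 1` and
`c_i = 2n - 1 - σ(i)` if `s i = -1`.  Then `v_w` lies in the PBW filtration
generated by `v = e₁ ∧ ⋯ ∧ e_k`, with PBW degree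
`#{i ≤ k : w(i) > k} + #{i ≤ k : w(i) < 0}`. -/
theorem pbw_degree_fundamental_sp (n k : ℕ) (hn : 1 ≤ n) (hk1 : 1 ≤ k) (hkn : k ≤ n)
    (σ : Equiv.Perm (Fin n)) (s : Fin n → ℤ) (hs : ∀ i, s i = 1 ∨ s i = -1) :
    IsLeast {d : ℕ |
        wedge (2 * n) k (fun i : Fin k =>
          Pi.single (if s (Fin.castLE hkn i) = 1 then
              Fin.castLE (by omega) (σ (Fin.castLE hkn i))
            else (Fin.castLE (by omega : n ≤ 2 * n) (σ (Fin.castLE hkn i))).rev) 1) ∈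
          pbwFiltration (spLowerDerivations n k)
            (wedge (2 * n) k (fun i : Fin k =>
              Pi.single (Fin.castLE (by omega : k ≤ 2 * n) i) 1)) d}
      ((Finset.univ.filter (fun i : Fin k =>
          s (Fin.castLE hkn i) = 1 ∧ k ≤ (σ (Fin.castLE hkn i) : ℕ))).card +
        (Finset.univ.filter (fun i : Fin k => s (Fin.castLE hkn i) = -1)).card) := by
  classical
  have hk2n : k ≤ 2 * n := by omega
  set D := (Finset.univ.filter (fun i : Fin k =>
      s (Fin.castLE hkn i) = 1 ∧ k ≤ (σ (Fin.castLE hkn i) : ℕ))).card +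
    (Finset.univ.filter (fun i : Fin k => s (Fin.castLE hkn i) = -1)).card with hD
  have Htinj : Function.Injective (tgtF hkn σ s) := tgtF_inj (σ := σ) (sg := s) hkn
  have Htgt : ∀ i j, tgtF hkn σ s i ≠ (tgtF hkn σ s j).rev :=
    tgtF_not_rev (σ := σ) (sg := s) hkn
  have hcond : ∀ i : Fin k, k ≤ (tgtF hkn σ s i : ℕ) ↔
      ((s (Fin.castLE hkn i) = 1 ∧ k ≤ (σ (Fin.castLE hkn i) : ℕ)) ∨
        s (Fin.castLE hkn i) = -1) := by
    intro i
    have hσ := (σ (Fin.castLE hkn i)).isLt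
    rcases hs (Fin.castLE hkn i) with h | h
    · rw [tgtF_val_pos hkn σ s h]
      constructor
      · intro hk; exact Or.inl ⟨h, hk⟩
      · rintro (⟨_, hk⟩ | h2)
        · exact hk
        · rw [h] at h2; exact absurd h2 (by norm_num)
    · have h1 : s (Fin.castLE hkn i) ≠ 1 := by rw [h]; norm_num
      rw [tgtF_val_neg hkn σ s h1]
      constructor
      · intro _; exact Or.inr h
      · intro _; omega
  have hDcard : (Finset.univ.filter (fun i : Fin k => k ≤ (tgtF hkn σ s i : ℕ))).card = D := by
    have hsplit : Finset.univ.filter (fun i : Fin k => k ≤ (tgtF hkn σ s i : ℕ)) =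
        Finset.univ.filter (fun i : Fin k =>
          (s (Fin.castLE hkn i) = 1 ∧ k ≤ (σ (Fin.castLE hkn i) : ℕ)) ∨
            s (Fin.castLE hkn i) = -1) :=
      Finset.filter_congr (fun i _ => hcond i)
    have hdis : Disjoint
        (Finset.univ.filter (fun i : Fin k =>
          s (Fin.castLE hkn i) = 1 ∧ k ≤ (σ (Fin.castLE hkn i) : ℕ)))
        (Finset.univ.filter (fun i : Fin k => s (Fin.castLE hkn i) = -1)) := by
      rw [Finset.disjoint_left]
      intro i hi1 hi2
      rw [Finset.mem_filter] at hi1 hi2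
      rw [hi1.2.1] at hi2
      norm_num at hi2
    rw [hsplit, Finset.filter_or, Finset.card_union_of_disjoint hdis, hD]
  obtain ⟨π, hπ⟩ := exists_perm hk2n (tgtF hkn σ s) Htinj Htgt
  set c₀ : Fin k → Fin (2 * n) := fun i => Fin.castLE hk2n (π i) with hc₀
  constructor
  · -- membership at D
    show Ws n k (tgtF hkn σ s) ∈ pbwFiltration (spLowerDerivations n k)
      (Ws n k (fun i => Fin.castLE hk2n i)) D
    have h0 : Ws n k c₀ ∈ pbwFiltration (spLowerDerivations n k)
        (Ws n k (fun i => Fin.castLE hk2n i)) 0 := by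
      show Ws n k c₀ ∈ Submodule.span ℂ {Ws n k (fun i => Fin.castLE hk2n i)}
      have hcomp : (fun i => (Pi.single (c₀ i) 1 : Fin (2 * n) → ℂ)) =
          (fun i => (Pi.single (Fin.castLE hk2n i) 1 : Fin (2 * n) → ℂ)) ∘ π := rfl
      have hperm : Ws n k c₀ =
          Equiv.Perm.sign π • Ws n k (fun i => Fin.castLE hk2n i) := by
        rw [Ws, Ws, wedge_eq, wedge_eq, hcomp]
        exact AlternatingMap.map_perm _ _ π
      rw [hperm]
      rcases Int.units_eq_one_or (Equiv.Perm.sign π) with h | h <;> rw [h]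
      · rw [one_smul]; exact Submodule.mem_span_singleton_self _
      · rw [Units.smul_def, Units.val_neg, Units.val_one, neg_zsmul, one_zsmul]
        exact Submodule.neg_mem _ (Submodule.mem_span_singleton_self _)
    have hH : ∀ i, c₀ i = tgtF hkn σ s i ∨ ((c₀ i : ℕ) < k ∧ k ≤ (tgtF hkn σ s i : ℕ) ∧
        (((tgtF hkn σ s i).rev : ℕ) < k → c₀ i = (tgtF hkn σ s i).rev)) := by
      intro i
      by_cases h1 : (tgtF hkn σ s i : ℕ) < k
      · exact Or.inl ((hπ i).1 h1)
      · refine Or.inr ⟨?_, by omega, fun h2 => (hπ i).2 h1 h2⟩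
        show ((Fin.castLE hk2n (π i) : Fin (2 * n)) : ℕ) < k
        rw [Fin.coe_castLE]
        exact (π i).isLt
    have hc₀inj : Function.Injective c₀ := by
      intro x y h
      apply π.injective
      apply Fin.val_injective
      have := congrArg Fin.val h
      rwa [hc₀, Fin.coe_castLE, Fin.coe_castLE] at this
    have hcard : (Finset.univ.filter (fun i => c₀ i ≠ tgtF hkn σ s i)).card = D := by
      rw [← hDcard]
      congr 1
      refine Finset.filter_congr (fun i _ => ?_)
      constructor
      · intro hne
        by_contra hnk
        push_neg at hnk
        exact hne ((hπ i).1 hnk)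
      · intro hk heq
        have h1 : ((c₀ i : Fin (2 * n)) : ℕ) < k := (π i).isLt
        rw [heq] at h1
        omega
    have := chain (Ws n k (fun i => Fin.castLE hk2n i)) (tgtF hkn σ s) Htinj Htgt
      D c₀ hc₀inj hH hcard 0 h0
    rwa [Nat.zero_add] at this
  · -- lower bound
    intro d' hd'
    by_contra hlt
    push_neg at hlt
    have hd'' : Ws n k (tgtF hkn σ s) ∈ pbwFiltration (spLowerDerivations n k)
        (Ws n k (fun i => Fin.castLE hk2n i)) d' := hd'
    have hcv0 : (Finset.univ.filter
        (fun i : Fin k => k ≤ ((Fin.castLE hk2n i : Fin (2 * n)) : ℕ))).card = 0 := by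
      rw [Finset.card_eq_zero, Finset.filter_eq_empty_iff]
      intro i _
      rw [Fin.coe_castLE]
      have := i.isLt
      omega
    have hW := F_le_Wgrade (fun i => Fin.castLE hk2n i) hcv0 d' hd''
    have hzero := psi_vanishes (tgtF hkn σ s) Htinj (by rw [hDcard]; exact hlt) hW
    exact psi_Ws_tgt_ne_zero (tgtF hkn σ s) Htinj hzero
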